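/- A rectangular partition (m, m, ..., m) with r rows (r ≥ 1) and m ≥ 1 is a P-position of RIT under normal play if and only if r is even. -/

import Mathlib

/-- The `j`-th part (0-indexed) of a partition given as a list, `0` beyond the end. -/
def part (l : List ℕ) (j : ℕ) : ℕ := l.getD j 0

/-- A partition: a nonincreasing list of positive integers. -/
def IsPartition (l : List ℕ) : Prop :=
  l.Chain' (· ≥ ·) ∧ ∀ x ∈ l, 0 < x

/-- RIT move: replace the part at (0-indexed) position `i` by a smaller value `v`,
keeping the sequence nonincreasing, then drop the (trailing) zeros. -/
def RitMove (l l' : List ℕ) : Prop :=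
  ∃ i v, i < l.length ∧ v < part l i ∧ (l.set i v).Chain' (· ≥ ·) ∧
    l' = (l.set i v).filter (fun x => x ≠ 0)

/-- RIT move on an odd-numbered row (1-indexed), i.e. an even 0-indexed position. -/
def RitMoveOdd (l l' : List ℕ) : Prop :=
  ∃ i v, i < l.length ∧ i % 2 = 0 ∧ v < part l i ∧ (l.set i v).Chain' (· ≥ ·) ∧
    l' = (l.set i v).filter (fun x => x ≠ 0)

/-- RIT move on an even-numbered row (1-indexed), i.e. an odd 0-indexed position. -/
def RitMoveEven (l l' : List ℕ) : Prop :=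
  ∃ i v, i < l.length ∧ i % 2 = 1 ∧ v < part l i ∧ (l.set i v).Chain' (· ≥ ·) ∧
    l' = (l.set i v).filter (fun x => x ≠ 0)

/-- `core λ = (λ₂, λ₂, λ₄, λ₄, …)` (1-indexed parts), as a `0`-padded sequence. -/
def core (l : List ℕ) : ℕ → ℕ := fun j => part l (2 * (j / 2) + 1)

/-- `rem λ = (λ₁ - λ₂, λ₃ - λ₄, …)` (1-indexed parts), as a `0`-padded sequence. -/
def rem (l : List ℕ) : ℕ → ℕ := fun i => part l (2 * i) - part l (2 * i + 1)

/-- A Nim move strictly decreases exactly one coordinate. -/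
def NimMove (p q : ℕ → ℕ) : Prop := ∃ i, q i < p i ∧ ∀ j, j ≠ i → q j = p j

/-- The nim-sum (bitwise XOR) of the remnant of `l`:
`(λ₁ - λ₂) ⊕ (λ₃ - λ₄) ⊕ ⋯ ⊕ (λ_{2⌈r/2⌉-1} - λ_{2⌈r/2⌉})`. -/
def nimSum (l : List ℕ) : ℕ :=
  (List.ofFn (fun i : Fin ((l.length + 1) / 2) => rem l i)).foldr (· ^^^ ·) 0

/-- The minimal excludant of a set of naturals. -/
noncomputable def mexOf (S : Set ℕ) : ℕ := sInf {n | n ∉ S}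

/-- `G` is the (normal play) Sprague-Grundy function of RIT. -/
def IsRitGrundy (G : List ℕ → ℕ) : Prop :=
  ∀ l, IsPartition l → G l = mexOf {n | ∃ l', RitMove l l' ∧ G l' = n}

/-- `G` is the misère Grundy function of RIT (value `1` at the terminal position). -/
def IsRitMisereGrundy (G : List ℕ → ℕ) : Prop :=
  G [] = 1 ∧ ∀ l, IsPartition l → l ≠ [] →
    G l = mexOf {n | ∃ l', RitMove l l' ∧ G l' = n}

/-- `G` is the misère Grundy function of Nim on `0`-padded sequences of heaps. -/
def IsNimMisereGrundy (G : (ℕ → ℕ) → ℕ) : Prop :=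
  (∀ p : ℕ → ℕ, (∀ i, p i = 0) → G p = 1) ∧
  (∀ p : ℕ → ℕ, (Function.support p).Finite → (∃ i, p i ≠ 0) →
    G p = mexOf {n | ∃ q, NimMove p q ∧ G q = n})

/-- `P` is the set of P-positions of RIT under normal play. -/
def IsRitP (P : List ℕ → Prop) : Prop :=
  ∀ l, IsPartition l → (P l ↔ ∀ l', RitMove l l' → ¬ P l')

/-!
The second player wins a rectangle with an even number of rows by mirroring: call a partition
*paired* if its rows `2k - 1` and `2k` are equal for every `k`. In a paired partition only the
lower row of a pair can be shortened (the upper one may not drop below its twin), and the reply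
that shortens the upper row to the same length restores pairedness. Since the total size
decreases, every paired partition is a P-position. A rectangle with an odd number of rows is
an N-position, because deleting its last row leaves a paired rectangle.
-/

lemma part_eq_zero {l : List ℕ} {j : ℕ} (h : l.length ≤ j) : part l j = 0 :=
  List.getD_eq_default _ _ h

lemma lt_length_of_part_pos {l : List ℕ} {j : ℕ} (h : 0 < part l j) : j < l.length := by
  by_contra hj
  exact h.ne' (part_eq_zero (not_lt.1 hj))

lemma part_eq_zero_of_forall {l : List ℕ} (h : ∀ x ∈ l, x = 0) (j : ℕ) : part l j = 0 := by
  rw [part, List.getD_eq_getElem?_getD]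
  cases hx : l[j]? with
  | none => rfl
  | some x => exact h x (List.mem_of_getElem? hx)

lemma part_replicate (r m j : ℕ) : part (List.replicate r m) j = if j < r then m else 0 := by
  split_ifs with hj
  · exact List.getD_replicate (x := m) hj
  · exact part_eq_zero (by simpa using hj)

lemma part_set {l : List ℕ} {i : ℕ} (hi : i < l.length) (v : ℕ) :
    part (l.set i v) = Function.update (part l) i v := by
  funext j
  obtain rfl | hj := eq_or_ne j i
  · simp [part, hi]
  · simp [part, hj, List.getD_eq_getElem?_getD, Ne.symm hj]

lemma isChain_ge_iff {l : List ℕ} :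
    l.IsChain (· ≥ ·) ↔ ∀ j, j + 1 < l.length → part l (j + 1) ≤ part l j := by
  rw [List.isChain_iff_getElem]
  refine forall_congr' fun j => forall_congr' fun hj => ?_
  rw [part, part, List.getD_eq_getElem _ _ hj, List.getD_eq_getElem _ _ (Nat.lt_of_succ_lt hj)]

lemma part_antitone {l : List ℕ} (hl : l.IsChain (· ≥ ·)) : Antitone (part l) := by
  refine antitone_nat_of_succ_le fun j => ?_
  by_cases hj : j + 1 < l.length
  · exact isChain_ge_iff.1 hl j hj
  · rw [part_eq_zero (not_lt.1 hj)]
    exact Nat.zero_le _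

lemma isChain_set {l : List ℕ} (hl : l.IsChain (· ≥ ·)) {i v : ℕ} (hi : i < l.length)
    (hv₁ : part l (i + 1) ≤ v) (hv₂ : v < part l i) : (l.set i v).IsChain (· ≥ ·) := by
  rw [isChain_ge_iff, List.length_set, part_set hi]
  intro j hj
  simp only [Function.update_apply]
  split_ifs with h₁ h₂ h₂
  · omega
  · subst h₁
    exact hv₂.le.trans (part_antitone hl (Nat.le_succ j))
  · rwa [h₂]
  · exact isChain_ge_iff.1 hl j hj

lemma part_filter_ne_zero {l : List ℕ} (hl : l.IsChain (· ≥ ·)) :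
    part (l.filter (· ≠ 0)) = part l := by
  induction l with
  | nil => rfl
  | cons a t ih =>
    funext j
    obtain rfl | ha := eq_or_ne a 0
    · have hzero : ∀ x ∈ 0 :: t, x = 0 := by
        intro x hx
        rcases List.mem_cons.1 hx with rfl | hx
        · rfl
        · exact Nat.le_zero.1 (List.rel_of_pairwise_cons (List.isChain_iff_pairwise.1 hl) hx)
      rw [List.filter_eq_nil_iff.2 (by simpa using hzero), part_eq_zero_of_forall hzero]
      rfl
    · cases j with
      | zero => simp [part, ha]
      | succ j => simpa [part, List.filter_cons, ha] using congrFun (ih hl.tail) j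

lemma sum_filter_ne_zero (l : List ℕ) : (l.filter (· ≠ 0)).sum = l.sum := by
  induction l with
  | nil => rfl
  | cons a t ih =>
    obtain rfl | ha := eq_or_ne a 0
    · simpa [List.filter_cons] using ih
    · simpa [List.filter_cons, ha] using ih

lemma sum_set_lt {l : List ℕ} {i v : ℕ} (hv : v < part l i) : (l.set i v).sum < l.sum := by
  induction l generalizing i with
  | nil => exact absurd hv (by simp [part])
  | cons a t ih =>
    cases i with
    | zero => simpa [part] using hv
    | succ i => simpa using ih hv

lemma isPartition_replicate (r : ℕ) {m : ℕ} (hm : 0 < m) : IsPartition (List.replicate r m) :=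
  ⟨List.isChain_replicate_of_rel r le_rfl, fun _ hx => (List.eq_of_mem_replicate hx).symm ▸ hm⟩

lemma RitMove.isPartition {l l' : List ℕ} (h : RitMove l l') : IsPartition l' := by
  obtain ⟨i, v, -, -, hchain, rfl⟩ := h
  refine ⟨hchain.sublist List.filter_sublist, fun x hx => Nat.pos_of_ne_zero ?_⟩
  simpa using (List.mem_filter.1 hx).2

lemma RitMove.sum_lt {l l' : List ℕ} (h : RitMove l l') : l'.sum < l.sum := by
  obtain ⟨i, v, -, hv, -, rfl⟩ := h
  rw [sum_filter_ne_zero]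
  exact sum_set_lt hv

lemma RitMove.exists_part_eq_update {l l' : List ℕ} (h : RitMove l l') :
    ∃ i v, part l (i + 1) ≤ v ∧ v < part l i ∧ part l' = Function.update (part l) i v := by
  obtain ⟨i, v, hi, hv, hchain, rfl⟩ := h
  have hset := part_set hi v
  refine ⟨i, v, ?_, hv, by rw [part_filter_ne_zero hchain, hset]⟩
  simpa [hset] using part_antitone hchain (Nat.le_succ i)

lemma exists_ritMove {l : List ℕ} (hl : l.IsChain (· ≥ ·)) {i v : ℕ}
    (hv₁ : part l (i + 1) ≤ v) (hv₂ : v < part l i) :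
    ∃ l', RitMove l l' ∧ part l' = Function.update (part l) i v := by
  have hi := lt_length_of_part_pos (v.zero_le.trans_lt hv₂)
  have hchain := isChain_set hl hi hv₁ hv₂
  exact ⟨_, ⟨i, v, hi, hv₂, hchain, rfl⟩, by rw [part_filter_ne_zero hchain, part_set hi]⟩

def IsPaired (l : List ℕ) : Prop := ∀ k, part l (2 * k + 1) = part l (2 * k)

lemma isPaired_replicate {r : ℕ} (hr : Even r) (m : ℕ) : IsPaired (List.replicate r m) := by
  obtain ⟨a, rfl⟩ := hr
  intro k
  simp only [part_replicate]
  split_ifs <;> omega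

lemma IsPaired.exists_ritMove_isPaired {l l' : List ℕ} (hl : IsPaired l) (h : RitMove l l') :
    ∃ l'', RitMove l' l'' ∧ IsPaired l'' := by
  obtain ⟨i, v, hv₁, hv₂, hpart⟩ := h.exists_part_eq_update
  obtain ⟨k, rfl | rfl⟩ := Nat.even_or_odd' i
  · rw [hl k] at hv₁
    omega
  · have hv₁' : part l' (2 * k + 1) ≤ v := by simp [hpart]
    have hv₂' : v < part l' (2 * k) := by simpa [hpart, ← hl k] using hv₂
    obtain ⟨l'', hmove, hpart''⟩ := exists_ritMove h.isPartition.1 hv₁' hv₂'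
    refine ⟨l'', hmove, fun j => ?_⟩
    obtain rfl | hj := eq_or_ne j k
    · simp [hpart'', hpart]
    · have h₁ : 2 * j + 1 ≠ 2 * k := by omega
      have h₂ : 2 * j ≠ 2 * k + 1 := by omega
      simpa [hpart'', hpart, hj, h₁, h₂] using hl j

theorem IsRitP.of_isPaired {P : List ℕ → Prop} (hP : IsRitP P) {l : List ℕ}
    (hl : IsPartition l) (hpaired : IsPaired l) : P l := by
  induction hn : l.sum using Nat.strong_induction_on generalizing l with
  | _ n ih =>
    rw [hP l hl]
    intro l' hmove hPl'
    obtain ⟨l'', hmove', hpaired''⟩ := hpaired.exists_ritMove_isPaired hmove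
    have hsum : l''.sum < n := hn ▸ hmove'.sum_lt.trans hmove.sum_lt
    exact (hP l' hmove.isPartition).1 hPl' l'' hmove' (ih _ hsum hmove'.isPartition hpaired'' rfl)

theorem stmt_12_general (P : List ℕ → Prop) (hP : IsRitP P) (r m : ℕ)
    (hm : 1 ≤ m) :
    P (List.replicate r m) ↔ Even r := by
  have hrect := isPartition_replicate r hm
  obtain ⟨a, rfl | rfl⟩ := Nat.even_or_odd' r
  · simpa using hP.of_isPaired hrect (isPaired_replicate (even_two_mul a) m)
  · suffices ¬ P (List.replicate (2 * a + 1) m) by simpa using this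
    intro hPrect
    obtain ⟨l', hmove, hpart⟩ := exists_ritMove hrect.1 (i := 2 * a) (v := 0)
      (by rw [part_replicate, if_neg (lt_irrefl _)])
      (by rw [part_replicate, if_pos (by omega)]; exact hm)
    have hpart' : part l' = part (List.replicate (2 * a) m) := by
      funext j
      simp only [hpart, Function.update_apply, part_replicate]
      split_ifs <;> omega
    have hpaired : IsPaired l' := by
      simpa only [IsPaired, hpart'] using isPaired_replicate (even_two_mul a) m
    exact (hP _ hrect).1 hPrect l' hmove (hP.of_isPaired hmove.isPartition hpaired)

/-- a rectangular partition with `r ≥ 1` rows of size `m ≥ 1` is a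
P-position of RIT under normal play iff `r` is even. -/
theorem stmt_12 (P : List ℕ → Prop) (hP : IsRitP P) (r m : ℕ)
    (hr : 1 ≤ r) (hm : 1 ≤ m) :
    P (List.replicate r m) ↔ Even r :=
  stmt_12_general P hP r m hm
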